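/- For any set S ⊆ {1,…,n} and any j ∈ {1,…,k}, Networks 1 and 2 imply that T_S := (T_i)_{i∈S} is a sufficient statistic of X_S^j := (X_i^j)_{i∈S} for U, and likewise T_S is a sufficient statistic of Y_S := (Y_i)_{i∈S} for U and of Z_S := (Z_i)_{i∈S} for U; that is, for every joint distribution satisfying both networks, U ⊥⊥ X_S^j | T_S and X_S^j ≥ι T_S (and similarly with Y_S and Z_S in place of X_S^j). -/

import Mathlib

/-!
Network 2 gives `U ⊥⊥ Y_i | Z_i`, and the Markov chain `Y_i → X_i^1 → ⋯ → X_i^k → Z_i` of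
network 1 gives `U ⊥⊥ (X_i, Z_i) | Y_i` and `Y_i ⊥⊥ Z_i | X_i^j`. When `U ⊥⊥ Z | Y` and
`U ⊥⊥ Y | Z`, the conditional law of `U` is constant along the connected components of the
bipartite graph of jointly possible values of `Y` and `Z`. So the component `W_i` (the Gács–Körner
common part of `Y_i` and `Z_i`) is sufficient for `Y_i`, hence for the whole tuple
`(X_i, Y_i, Z_i)`. By minimality `T_i` is a function of `W_i`, which is a function of `Y_i`, of
`Z_i` and, as `Y_i ⊥⊥ Z_i | X_i^j`, of `X_i^j`.

Network 1 also makes the tuple of chain `i` independent of the other chains given `U`, and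
sufficient statistics of conditionally independent variables combine: `T_S` is sufficient for the
tuples indexed by `S`, hence for `X_S^j`, `Y_S` and `Z_S`, each of which determines it.
-/

namespace Paper

/-- The probability of an event under a probability mass function. -/
noncomputable def pr {Ω : Type} (μ : PMF Ω) (E : Set Ω) : ENNReal :=
  μ.toOuterMeasure E

/-- Conditional independence `X ⊥⊥ Y | Z`:
`p(x,y,z) p(z) = p(x,z) p(y,z)` for all `x, y, z`. -/
def CondIndep {Ω α β γ : Type} (μ : PMF Ω) (X : Ω → α) (Y : Ω → β) (Z : Ω → γ) : Prop :=
  ∀ (x : α) (y : β) (z : γ),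
    pr μ {ω | X ω = x ∧ Y ω = y ∧ Z ω = z} * pr μ {ω | Z ω = z}
      = pr μ {ω | X ω = x ∧ Z ω = z} * pr μ {ω | Y ω = y ∧ Z ω = z}

/-- Unconditional independence `X ⊥⊥ Y`. -/
def Indep {Ω α β : Type} (μ : PMF Ω) (X : Ω → α) (Y : Ω → β) : Prop :=
  ∀ (x : α) (y : β),
    pr μ {ω | X ω = x ∧ Y ω = y} = pr μ {ω | X ω = x} * pr μ {ω | Y ω = y}

/-- `X ≥ι Y`: `X` functionally determines `Y` (with probability one). -/
def FunDep {Ω α β : Type} (μ : PMF Ω) (X : Ω → α) (Y : Ω → β) : Prop :=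
  ∃ f : α → β, ∀ ω ∈ μ.support, Y ω = f (X ω)

/-- `X =ι Y`: informational equivalence. -/
def InfoEq {Ω α β : Type} (μ : PMF Ω) (X : Ω → α) (Y : Ω → β) : Prop :=
  FunDep μ X Y ∧ FunDep μ Y X

/-- The random variable `X` has finite support. -/
def FinSupp {Ω α : Type} (μ : PMF Ω) (X : Ω → α) : Prop :=
  (X '' μ.support).Finite

/-- The random variable `X` has support of cardinality at most `ℓ`. -/
def CardLE {Ω α : Type} (μ : PMF Ω) (X : Ω → α) (ℓ : ℕ) : Prop :=
  ∃ s : Finset α, s.card ≤ ℓ ∧ ∀ ω ∈ μ.support, X ω ∈ s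

/-- `X` is uniformly distributed with support of cardinality `ℓ`. -/
def UniformCard {Ω α : Type} (μ : PMF Ω) (X : Ω → α) (ℓ : ℕ) : Prop :=
  ∃ S : Finset α, S.card = ℓ ∧ (∀ x ∈ S, pr μ {ω | X ω = x} = (ℓ : ENNReal)⁻¹) ∧
    ∀ x, x ∉ S → pr μ {ω | X ω = x} = 0

/-- The probability mass function of the random variable `X`. -/
noncomputable def distOf {Ω α : Type} (μ : PMF Ω) (X : Ω → α) : α → ENNReal :=
  fun x => pr μ {ω | X ω = x}

/-- `p ⪰ q` : `p` majorizes `q`, i.e. for every `k`, the sum of the `k` largest values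
of `p` is at least the sum of the `k` largest values of `q`. -/
def Majorizes (p q : ℕ → ENNReal) : Prop :=
  ∀ s : Finset ℕ, ∃ t : Finset ℕ, t.card ≤ s.card ∧ ∑ x ∈ s, q x ≤ ∑ x ∈ t, p x

/-- `T` is a sufficient statistic of `X` for `U`: `X ≥ι T` and `U ⊥⊥ X | T`. -/
def SuffStat {Ω α β γ : Type} (μ : PMF Ω) (X : Ω → α) (U : Ω → β) (T : Ω → γ) : Prop :=
  FunDep μ X T ∧ CondIndep μ U X T

/-- `T` is a minimal sufficient statistic of `X` for `U`. -/
def MinSuffStat {Ω α β γ : Type} (μ : PMF Ω) (X : Ω → α) (U : Ω → β) (T : Ω → γ) : Prop :=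
  SuffStat μ X U T ∧
    ∀ (δ : Type) (T' : Ω → δ), SuffStat μ X U T' → FunDep μ T' T

/-- Mutual independence of the subfamily `(V i)_{i ∈ s}`: each `V i` (for `i ∈ s`) is
independent of the joint variable of the others. -/
def MutIndepOn {Ω ι : Type} {β : ι → Type} (μ : PMF Ω) (V : ∀ i, Ω → β i)
    (s : Finset ι) : Prop :=
  ∀ i ∈ s, Indep μ (V i) (fun ω => fun j : {j // j ∈ s ∧ j ≠ i} => V j.1 ω)

/-- Mutual independence of the whole family `(V i)_i`. -/
def MutIndep {Ω ι : Type} {β : ι → Type} (μ : PMF Ω) (V : ∀ i, Ω → β i) : Prop :=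
  ∀ i, Indep μ (V i) (fun ω => fun j : {j // j ≠ i} => V j.1 ω)

/-- Mutual independence of `(V i)_{i ∈ C}` for a list `C` of indices. -/
def MutIndepL {Ω : Type} (μ : PMF Ω) (V : ℕ → Ω → ℕ) (C : List ℕ) : Prop :=
  ∀ i ∈ C, Indep μ (V i) (fun ω => fun j : {j // j ∈ C ∧ j ≠ i} => V j.1 ω)

/-- The joint random variable `(X a)_{a ∈ A}` for a list `A` of indices. -/
def jointOn {Ω : Type} (X : ℕ → Ω → ℕ) (A : List ℕ) : Ω → ({a : ℕ // a ∈ A} → ℕ) :=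
  fun ω a => X a.1 ω

/-- The joint random variable `(T i)_{i ∈ S}` for a finset `S` of indices. -/
def jointFin {Ω ι : Type} {β : ι → Type} (T : ∀ i, Ω → β i) (S : Finset ι) :
    Ω → ((i : {i // i ∈ S}) → β i.1) :=
  fun ω i => T i.1 ω

/-- The set of parents (in-neighbours) of `w` in the directed graph with edge relation `E`. -/
def parentSet {ν : Type} (E : ν → ν → Prop) (w : ν) : Set ν := {v | E v w}

/-- The set of nodes that are neither descendants nor parents of `w`. -/
def nonDescSet {ν : Type} (E : ν → ν → Prop) (w : ν) : Set ν :=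
  {v | ¬ Relation.ReflTransGen E w v ∧ ¬ E v w}

/-- The collection of random variables `(X v)_v` satisfies the Bayesian network structure
with edge relation `E`: each variable is conditionally independent of its
non-descendant non-parent variables given its parent variables. -/
def SatisfiesBN {Ω ν : Type} {β : ν → Type} (μ : PMF Ω) (X : ∀ v, Ω → β v)
    (E : ν → ν → Prop) : Prop :=
  ∀ w : ν, CondIndep μ (X w)
    (fun ω => fun v : nonDescSet E w => X v.1 ω)
    (fun ω => fun v : parentSet E w => X v.1 ω)

/-- `E` is (the edge list of) a directed acyclic graph on the nodes `{0, …, n-1}`. -/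
def IsDAG (n : ℕ) (E : List (ℕ × ℕ)) : Prop :=
  (∀ e ∈ E, e.1 < n ∧ e.2 < n) ∧
    ∀ i : ℕ, ¬ Relation.TransGen (fun a c => (a, c) ∈ E) i i

/-- The edge relation on `Fin n` determined by an edge list. -/
def edgeRelOn (n : ℕ) (E : List (ℕ × ℕ)) : Fin n → Fin n → Prop :=
  fun i j => ((i : ℕ), (j : ℕ)) ∈ E

/-- `(X_0, …, X_{n-1})` satisfies the Bayesian network given by the edge list `E`. -/
def SatisfiesBNn {Ω : Type} (μ : PMF Ω) (n : ℕ) (X : ℕ → Ω → ℕ)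
    (E : List (ℕ × ℕ)) : Prop :=
  SatisfiesBN μ (fun i : Fin n => X (i : ℕ)) (edgeRelOn n E)

/-- `(A, C, B) ∈ I(G_1, …, G_m)`: every collection of finitely supported discrete random
variables satisfying all the network structures in `Gs` satisfies `X_A ⊥⊥ X_B | X_C`. -/
def ImpliedCI (n : ℕ) (Gs : List (List (ℕ × ℕ))) (A C B : List ℕ) : Prop :=
  ∀ (Ω : Type) (μ : PMF Ω) (X : ℕ → Ω → ℕ),
    (∀ i, i < n → FinSupp μ (X i)) →
    (∀ G ∈ Gs, SatisfiesBNn μ n X G) →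
    CondIndep μ (jointOn X A) (jointOn X B) (jointOn X C)

/-- Two lists are disjoint as sets. -/
def DisjointL (A B : List ℕ) : Prop := ∀ a ∈ A, a ∉ B

end Paper
namespace Paper

/-- The nodes of the two networks: `u i = U_i`, `y i = Y_i`, `z i = Z_i`,
`x i j = X_i^j`. -/
inductive BNode (n k : ℕ) : Type
  | u : Fin n → BNode n k
  | y : Fin n → BNode n k
  | z : Fin n → BNode n k
  | x : Fin n → Fin k → BNode n k

/-- Edge relation of Network 1: `U_i → U_{i'}` for `i ∈ C1, i' ∉ C1` and for
`i, i' ∉ C1` with `i < i'`; and `U_i → Y_i → X_i^1 → ⋯ → X_i^k → Z_i`. -/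
def edge1 (n k : ℕ) (C1 : Finset (Fin n)) : BNode n k → BNode n k → Prop :=
  fun v w => match v, w with
  | .u i, .u i' => (i ∈ C1 ∧ i' ∉ C1) ∨ (i ∉ C1 ∧ i' ∉ C1 ∧ i < i')
  | .u i, .y i' => i = i'
  | .y i, .x i' j => i = i' ∧ (j : ℕ) = 0
  | .x i j, .x i' j' => i = i' ∧ (j' : ℕ) = (j : ℕ) + 1
  | .x i j, .z i' => i = i' ∧ (j : ℕ) = k - 1
  | _, _ => False

/-- Edge relation of Network 2: `U_i → U_{i'}` for `i ∈ C2, i' ∉ C2` and for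
`i, i' ∉ C2` with `i < i'`; `U_i → Z_i → Y_i`; `U_i → X_i^j` for `i ≠ b j`; and
`X_i^j → X_{b_j}^j` for `i ∈ A j`. -/
def edge2 (n k : ℕ) (C2 : Finset (Fin n)) (A : Fin k → Finset (Fin n))
    (b : Fin k → Fin n) : BNode n k → BNode n k → Prop :=
  fun v w => match v, w with
  | .u i, .u i' => (i ∈ C2 ∧ i' ∉ C2) ∨ (i ∉ C2 ∧ i' ∉ C2 ∧ i < i')
  | .u i, .z i' => i = i'
  | .z i, .y i' => i = i'
  | .u i, .x i' j => i = i' ∧ i' ≠ b j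
  | .x i j, .x i' j' => j = j' ∧ i' = b j ∧ i ∈ A j
  | _, _ => False

/-- The joint random variable `U = (U_1, …, U_n)`. -/
def Ujoint {Ω : Type} {n k : ℕ} (X : BNode n k → Ω → ℕ) : Ω → (Fin n → ℕ) :=
  fun ω i => X (.u i) ω

/-- The joint random variable `((X_i^j)_{j=1}^k, Y_i, Z_i)`. -/
def tupleVar {Ω : Type} {n k : ℕ} (X : BNode n k → Ω → ℕ) (i : Fin n) :
    Ω → ((Fin k → ℕ) × ℕ × ℕ) :=
  fun ω => (fun j => X (.x i j) ω, X (.y i) ω, X (.z i) ω)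

end Paper

namespace Paper

lemma cross_mul_trans {a b c d e f : ENNReal} (hc : c ≠ 0) (hc' : c ≠ ⊤) (h₁ : a * c = e * d)
    (h₂ : e * b = f * c) : a * b = f * d := by
  refine (ENNReal.mul_left_inj hc hc').mp ?_
  calc a * b * c = (a * c) * b := by ring
    _ = d * (e * b) := by rw [h₁]; ring
    _ = f * d * c := by rw [h₂]; ring

section

variable {Ω α β γ δ κ : Type} {μ : PMF Ω}

section Probability

lemma pr_congr {p q : Ω → Prop} (h : ∀ ω ∈ μ.support, p ω ↔ q ω) :
    pr μ {ω | p ω} = pr μ {ω | q ω} :=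
  μ.toOuterMeasure_apply_eq_of_inter_support_eq <| Set.ext fun ω =>
    ⟨fun hω => ⟨(h ω hω.2).1 hω.1, hω.2⟩, fun hω => ⟨(h ω hω.2).2 hω.1, hω.2⟩⟩

lemma pr_mono {p q : Ω → Prop} (h : ∀ ω, p ω → q ω) : pr μ {ω | p ω} ≤ pr μ {ω | q ω} :=
  μ.toOuterMeasure.mono h

lemma pr_ne_top (E : Set Ω) : pr μ E ≠ ⊤ := by
  rw [pr, PMF.toOuterMeasure_apply]
  exact μ.tsum_coe_indicator_ne_top E

lemma pr_eq_zero_iff {p : Ω → Prop} : pr μ {ω | p ω} = 0 ↔ ∀ ω ∈ μ.support, ¬ p ω := by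
  rw [pr, PMF.toOuterMeasure_apply_eq_zero_iff, Set.disjoint_left]
  rfl

lemma pr_eq_zero_of_imp {p q : Ω → Prop} (h : ∀ ω, p ω → q ω) (hq : pr μ {ω | q ω} = 0) :
    pr μ {ω | p ω} = 0 :=
  le_antisymm (hq ▸ pr_mono h) zero_le

lemma pr_ne_zero_iff {p : Ω → Prop} : pr μ {ω | p ω} ≠ 0 ↔ ∃ ω ∈ μ.support, p ω := by
  simp only [ne_eq, pr_eq_zero_iff, not_forall, not_not, exists_prop]

lemma pr_ne_zero_of_mem_support {p : Ω → Prop} {ω : Ω} (hω : ω ∈ μ.support) (h : p ω) :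
    pr μ {ω | p ω} ≠ 0 :=
  pr_ne_zero_iff.mpr ⟨ω, hω, h⟩

lemma pr_eq_tsum_fiber (V : Ω → γ) (p : Ω → Prop) :
    pr μ {ω | p ω} = ∑' g, pr μ {ω | p ω ∧ V ω = g} := by
  classical
  simp only [pr, PMF.toOuterMeasure_apply]
  rw [ENNReal.tsum_comm]
  refine tsum_congr fun ω => ?_
  rw [tsum_eq_single (V ω) fun g hg => Set.indicator_of_notMem (fun h => hg h.2.symm) _]
  simp only [Set.indicator, Set.mem_ofPred_eq, and_true]

open scoped Classical in
lemma pr_eq_tsum_ite {Y : Ω → β} {Y' : Ω → δ} {φ : β → δ}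
    (hφ : ∀ ω ∈ μ.support, Y' ω = φ (Y ω)) (p : Ω → Prop) (b : δ) :
    pr μ {ω | p ω ∧ Y' ω = b} = ∑' y, if φ y = b then pr μ {ω | p ω ∧ Y ω = y} else 0 := by
  rw [pr_eq_tsum_fiber Y]
  refine tsum_congr fun y => ?_
  split_ifs with hy
  · exact pr_congr fun ω hω => by rw [hφ ω hω]; grind
  · exact pr_eq_zero_iff.mpr fun ω hω h => hy (by rw [← h.2, ← hφ ω hω, h.1.2])

end Probability

section FunctionalDependence

lemma FunDep.trans {X : Ω → α} {Y : Ω → β} {Z : Ω → γ} (h₁ : FunDep μ X Y) (h₂ : FunDep μ Y Z) :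
    FunDep μ X Z := by
  obtain ⟨f, hf⟩ := h₁
  obtain ⟨g, hg⟩ := h₂
  exact ⟨g ∘ f, fun ω hω => by rw [hg ω hω, hf ω hω, Function.comp_apply]⟩

lemma FunDep.of_forall {X : Ω → α} {Y : Ω → β}
    (h : ∀ ω ∈ μ.support, ∀ ω' ∈ μ.support, X ω = X ω' → Y ω = Y ω') : FunDep μ X Y := by
  classical
  obtain ⟨ω₀, -⟩ := μ.support_nonempty
  refine ⟨fun x => if hx : ∃ ω ∈ μ.support, X ω = x then Y hx.choose else Y ω₀,
    fun ω hω => ?_⟩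
  have hx : ∃ ω' ∈ μ.support, X ω' = X ω := ⟨ω, hω, rfl⟩
  dsimp only
  rw [dif_pos hx]
  exact h ω hω _ hx.choose_spec.1 hx.choose_spec.2.symm

lemma InfoEq.of_forall {X : Ω → α} {Y : Ω → β}
    (h : ∀ ω ∈ μ.support, ∀ ω' ∈ μ.support, X ω = X ω' ↔ Y ω = Y ω') : InfoEq μ X Y :=
  ⟨FunDep.of_forall fun ω hω ω' hω' => (h ω hω ω' hω').mp,
    FunDep.of_forall fun ω hω ω' hω' => (h ω hω ω' hω').mpr⟩

end FunctionalDependence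

section CondIndepCalculus

variable {X : Ω → α} {Y : Ω → β} {Z : Ω → γ}

lemma CondIndep.symm (h : CondIndep μ X Y Z) : CondIndep μ Y X Z := by
  intro y x z
  have e : pr μ {ω | Y ω = y ∧ X ω = x ∧ Z ω = z} = pr μ {ω | X ω = x ∧ Y ω = y ∧ Z ω = z} :=
    pr_congr fun ω _ => by tauto
  rw [e, h x y z, mul_comm]

lemma CondIndep.of_funDep_right {Y' : Ω → δ} (h : CondIndep μ X Y Z) (hY : FunDep μ Y Y') :
    CondIndep μ X Y' Z := by
  classical
  obtain ⟨φ, hφ⟩ := hY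
  intro x b z
  have hXZ := pr_eq_tsum_ite hφ (fun ω => X ω = x ∧ Z ω = z) b
  have hZ := pr_eq_tsum_ite hφ (fun ω => Z ω = z) b
  have e1 : pr μ {ω | X ω = x ∧ Y' ω = b ∧ Z ω = z}
      = pr μ {ω | (X ω = x ∧ Z ω = z) ∧ Y' ω = b} := pr_congr fun ω _ => by tauto
  have e2 : pr μ {ω | Y' ω = b ∧ Z ω = z} = pr μ {ω | Z ω = z ∧ Y' ω = b} :=
    pr_congr fun ω _ => by tauto
  rw [e1, e2, hXZ, hZ, ← ENNReal.tsum_mul_right, ← ENNReal.tsum_mul_left]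
  refine tsum_congr fun y => ?_
  split_ifs
  · convert h x y z using 2 <;> exact pr_congr fun ω _ => by tauto
  · simp

lemma CondIndep.of_funDep_left {X' : Ω → δ} (h : CondIndep μ X Y Z) (hX : FunDep μ X X') :
    CondIndep μ X' Y Z :=
  (h.symm.of_funDep_right hX).symm

lemma CondIndep.of_infoEq_cond {Z' : Ω → δ} (h : CondIndep μ X Y Z) (hZ : InfoEq μ Z Z') :
    CondIndep μ X Y Z' := by
  obtain ⟨⟨σ, hσ⟩, ⟨ρ, hρ⟩⟩ := hZ
  intro x y z'
  by_cases hz : σ (ρ z') = z'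
  · have key : ∀ ω ∈ μ.support, Z' ω = z' ↔ Z ω = ρ z' := fun ω hω =>
      ⟨fun h' => by rw [hρ ω hω, h'], fun h' => by rw [hσ ω hω, h', hz]⟩
    convert h x y (ρ z') using 2 <;> exact pr_congr fun ω hω => by rw [key ω hω]
  · have key : ∀ ω ∈ μ.support, Z' ω ≠ z' := fun ω hω h' =>
      hz (by rw [← h', ← hρ ω hω, ← hσ ω hω])
    have h0 : pr μ {ω | Z' ω = z'} = 0 := pr_eq_zero_iff.mpr key
    rw [h0, pr_eq_zero_of_imp (fun ω h' => h'.2.2) h0, pr_eq_zero_of_imp (fun ω h' => h'.2) h0]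
    simp

lemma CondIndep.weak_union {W : Ω → δ} (h : CondIndep μ X (fun ω => (Y ω, W ω)) Z) :
    CondIndep μ X Y (fun ω => (Z ω, W ω)) := by
  rintro x y ⟨z, w⟩
  have e1 : pr μ {ω | X ω = x ∧ Y ω = y ∧ (Z ω, W ω) = (z, w)}
      = pr μ {ω | X ω = x ∧ (Y ω, W ω) = (y, w) ∧ Z ω = z} :=
    pr_congr fun ω _ => by simp only [Prod.mk.injEq]; tauto
  have e2 : pr μ {ω | (Z ω, W ω) = (z, w)} = pr μ {ω | W ω = w ∧ Z ω = z} :=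
    pr_congr fun ω _ => by simp only [Prod.mk.injEq]; tauto
  have e3 : pr μ {ω | X ω = x ∧ (Z ω, W ω) = (z, w)} = pr μ {ω | X ω = x ∧ W ω = w ∧ Z ω = z} :=
    pr_congr fun ω _ => by simp only [Prod.mk.injEq]; tauto
  have e4 : pr μ {ω | Y ω = y ∧ (Z ω, W ω) = (z, w)}
      = pr μ {ω | (Y ω, W ω) = (y, w) ∧ Z ω = z} :=
    pr_congr fun ω _ => by simp only [Prod.mk.injEq]; tauto
  rw [e1, e2, e3, e4]
  by_cases hz : pr μ {ω | Z ω = z} = 0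
  · rw [pr_eq_zero_of_imp (fun ω h => h.2.2) hz, zero_mul,
      pr_eq_zero_of_imp (fun ω h => h.2.2) hz, zero_mul]
  exact cross_mul_trans hz (pr_ne_top _) (h x (y, w) z)
    ((h.of_funDep_right ⟨Prod.snd, fun _ _ => rfl⟩) x w z).symm

lemma CondIndep.contraction {W : Ω → δ} (h₁ : CondIndep μ X Y (fun ω => (Z ω, W ω)))
    (h₂ : CondIndep μ X W Z) : CondIndep μ X (fun ω => (Y ω, W ω)) Z := by
  rintro x ⟨y, w⟩ z
  have e1 : pr μ {ω | X ω = x ∧ (Y ω, W ω) = (y, w) ∧ Z ω = z}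
      = pr μ {ω | X ω = x ∧ Y ω = y ∧ (Z ω, W ω) = (z, w)} :=
    pr_congr fun ω _ => by simp only [Prod.mk.injEq]; tauto
  have e2 : pr μ {ω | (Y ω, W ω) = (y, w) ∧ Z ω = z}
      = pr μ {ω | Y ω = y ∧ (Z ω, W ω) = (z, w)} :=
    pr_congr fun ω _ => by simp only [Prod.mk.injEq]; tauto
  have e3 : pr μ {ω | (Z ω, W ω) = (z, w)} = pr μ {ω | W ω = w ∧ Z ω = z} :=
    pr_congr fun ω _ => by simp only [Prod.mk.injEq]; tauto
  have e4 : pr μ {ω | X ω = x ∧ (Z ω, W ω) = (z, w)} = pr μ {ω | X ω = x ∧ W ω = w ∧ Z ω = z} :=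
    pr_congr fun ω _ => by simp only [Prod.mk.injEq]; tauto
  have k₁ := h₁ x y (z, w)
  rw [e3, e4] at k₁
  rw [e1, e2]
  by_cases hwz : pr μ {ω | W ω = w ∧ Z ω = z} = 0
  · have hwz' : pr μ {ω | (Z ω, W ω) = (z, w)} = 0 := e3 ▸ hwz
    rw [pr_eq_zero_of_imp (fun ω h => h.2.2) hwz', zero_mul, eq_comm, mul_eq_zero]
    exact Or.inr (pr_eq_zero_of_imp (fun ω h => h.2) hwz')
  exact cross_mul_trans hwz (pr_ne_top _) k₁ (h₂ x w z)

end CondIndepCalculus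

section Sufficiency

variable {U : Ω → κ} {X : Ω → α} {T : Ω → γ} {f : α → γ}

-- `U ⊥⊥ X | f ∘ X` iff `P(U = · | X = x)` depends only on `f x`; in cross-multiplied form this
-- needs no care about null events.
lemma CondIndep.cross (h : CondIndep μ U X T) (hf : ∀ ω ∈ μ.support, T ω = f (X ω))
    {x x' : α} (hx : f x = f x') (u u' : κ) :
    pr μ {ω | U ω = u ∧ X ω = x} * pr μ {ω | U ω = u' ∧ X ω = x'}
      = pr μ {ω | U ω = u ∧ X ω = x'} * pr μ {ω | U ω = u' ∧ X ω = x} := by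
  set t := f x
  have hfib : ∀ {x₀}, f x₀ = t → ∀ ω ∈ μ.support, X ω = x₀ → T ω = t := fun h₀ ω hω h' => by
    rw [hf ω hω, h', h₀]
  have key : ∀ {x₀}, f x₀ = t → ∀ u₀, pr μ {ω | U ω = u₀ ∧ X ω = x₀} * pr μ {ω | T ω = t}
      = pr μ {ω | U ω = u₀ ∧ T ω = t} * pr μ {ω | X ω = x₀} := fun {x₀} h₀ u₀ => by
    have e1 : pr μ {ω | U ω = u₀ ∧ X ω = x₀} = pr μ {ω | U ω = u₀ ∧ X ω = x₀ ∧ T ω = t} :=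
      pr_congr fun ω hω => ⟨fun h' => ⟨h'.1, h'.2, hfib h₀ ω hω h'.2⟩, fun h' => ⟨h'.1, h'.2.1⟩⟩
    have e2 : pr μ {ω | X ω = x₀} = pr μ {ω | X ω = x₀ ∧ T ω = t} :=
      pr_congr fun ω hω => ⟨fun h' => ⟨h', hfib h₀ ω hω h'⟩, And.left⟩
    rw [e1, e2]
    exact h u₀ x₀ t
  by_cases ht : pr μ {ω | T ω = t} = 0
  · have h0 : ∀ {x₀}, f x₀ = t → ∀ u₀, pr μ {ω | U ω = u₀ ∧ X ω = x₀} = 0 := fun h₀ u₀ =>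
      pr_eq_zero_iff.mpr fun ω hω h' => pr_eq_zero_iff.mp ht ω hω (hfib h₀ ω hω h'.2)
    rw [h0 rfl u, h0 hx.symm u, zero_mul, zero_mul]
  refine (ENNReal.mul_left_inj (mul_ne_zero ht ht)
    (ENNReal.mul_ne_top (pr_ne_top _) (pr_ne_top _))).mp ?_
  calc _ = (pr μ {ω | U ω = u ∧ X ω = x} * pr μ {ω | T ω = t})
        * (pr μ {ω | U ω = u' ∧ X ω = x'} * pr μ {ω | T ω = t}) := by ring
    _ = (pr μ {ω | U ω = u ∧ X ω = x'} * pr μ {ω | T ω = t})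
        * (pr μ {ω | U ω = u' ∧ X ω = x} * pr μ {ω | T ω = t}) := by
      rw [key rfl, key hx.symm, key rfl, key hx.symm]; ring
    _ = _ := by ring

lemma condIndep_of_cross (hf : ∀ ω ∈ μ.support, T ω = f (X ω))
    (h : ∀ u u' x x', f x = f x' →
      pr μ {ω | U ω = u ∧ X ω = x} * pr μ {ω | U ω = u' ∧ X ω = x'}
        = pr μ {ω | U ω = u ∧ X ω = x'} * pr μ {ω | U ω = u' ∧ X ω = x}) :
    CondIndep μ U X T := by
  classical
  intro u x t
  by_cases hx : f x = t
  swap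
  · have h0 : pr μ {ω | X ω = x ∧ T ω = t} = 0 :=
      pr_eq_zero_iff.mpr fun ω hω h' => hx (by rw [← h'.2, hf ω hω, h'.1])
    rw [pr_eq_zero_of_imp (fun ω h' => h'.2) h0, h0, zero_mul, mul_zero]
  subst hx
  have e1 : pr μ {ω | U ω = u ∧ X ω = x ∧ T ω = f x} = pr μ {ω | U ω = u ∧ X ω = x} :=
    pr_congr fun ω hω => ⟨fun h' => ⟨h'.1, h'.2.1⟩,
      fun h' => ⟨h'.1, h'.2, by rw [hf ω hω, h'.2]⟩⟩
  have e2 : pr μ {ω | X ω = x ∧ T ω = f x} = pr μ {ω | X ω = x} :=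
    pr_congr fun ω hω => ⟨And.left, fun h' => ⟨h', by rw [hf ω hω, h']⟩⟩
  have hX : ∀ x', pr μ {ω | X ω = x'} = ∑' u', pr μ {ω | U ω = u' ∧ X ω = x'} := fun x' => by
    rw [pr_eq_tsum_fiber U]
    exact tsum_congr fun u' => pr_congr fun ω _ => and_comm
  have hT : pr μ {ω | T ω = f x}
      = ∑' x', if f x' = f x then ∑' u', pr μ {ω | U ω = u' ∧ X ω = x'} else 0 := by
    rw [pr_congr (q := fun ω => True ∧ T ω = f x) fun ω _ => (true_and _).symm.to_iff,
      pr_eq_tsum_ite hf]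
    simp only [true_and, hX]
  rw [e1, e2, hT, pr_eq_tsum_ite hf, hX, ← ENNReal.tsum_mul_left, ← ENNReal.tsum_mul_right]
  refine tsum_congr fun x' => ?_
  split_ifs with hx'
  · rw [← ENNReal.tsum_mul_left, ← ENNReal.tsum_mul_left]
    exact tsum_congr fun u' => h u u' x x' hx'.symm
  · simp

lemma SuffStat.prod {A : Ω → α} {B : Ω → β} {TA : Ω → γ} {TB : Ω → δ}
    (hA : SuffStat μ A U TA) (hB : SuffStat μ B U TB) (hAB : CondIndep μ A B U) :
    SuffStat μ (fun ω => (A ω, B ω)) U (fun ω => (TA ω, TB ω)) := by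
  obtain ⟨⟨fA, hfA⟩, hA⟩ := hA
  obtain ⟨⟨fB, hfB⟩, hB⟩ := hB
  have hf : ∀ ω ∈ μ.support, (TA ω, TB ω) = Prod.map fA fB (A ω, B ω) := fun ω hω => by
    rw [hfA ω hω, hfB ω hω, Prod.map_apply]
  refine ⟨⟨_, hf⟩, condIndep_of_cross hf ?_⟩
  rintro u u' ⟨a, b⟩ ⟨a', b'⟩ hab
  obtain ⟨ha, hb⟩ := Prod.mk.inj hab
  have hsplit : ∀ u a b, pr μ {ω | U ω = u ∧ (A ω, B ω) = (a, b)} * pr μ {ω | U ω = u}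
      = pr μ {ω | U ω = u ∧ A ω = a} * pr μ {ω | U ω = u ∧ B ω = b} := fun u a b => by
    have e1 : pr μ {ω | U ω = u ∧ (A ω, B ω) = (a, b)} = pr μ {ω | A ω = a ∧ B ω = b ∧ U ω = u} :=
      pr_congr fun ω _ => by simp only [Prod.mk.injEq]; tauto
    have e2 : pr μ {ω | U ω = u ∧ A ω = a} = pr μ {ω | A ω = a ∧ U ω = u} :=
      pr_congr fun ω _ => and_comm
    have e3 : pr μ {ω | U ω = u ∧ B ω = b} = pr μ {ω | B ω = b ∧ U ω = u} :=
      pr_congr fun ω _ => and_comm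
    rw [e1, e2, e3]
    exact hAB a b u
  by_cases hu : pr μ {ω | U ω = u} = 0
  · rw [pr_eq_zero_of_imp (fun ω h => h.1) hu, zero_mul,
      pr_eq_zero_of_imp (fun ω h => h.1) hu, zero_mul]
  by_cases hu' : pr μ {ω | U ω = u'} = 0
  · rw [mul_comm, pr_eq_zero_of_imp (fun ω h => h.1) hu', zero_mul,
      mul_comm, pr_eq_zero_of_imp (fun ω h => h.1) hu', zero_mul]
  refine (ENNReal.mul_left_inj (mul_ne_zero hu hu')
    (ENNReal.mul_ne_top (pr_ne_top _) (pr_ne_top _))).mp ?_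
  calc _ = (pr μ {ω | U ω = u ∧ (A ω, B ω) = (a, b)} * pr μ {ω | U ω = u})
        * (pr μ {ω | U ω = u' ∧ (A ω, B ω) = (a', b')} * pr μ {ω | U ω = u'}) := by ring
    _ = (pr μ {ω | U ω = u ∧ A ω = a} * pr μ {ω | U ω = u' ∧ A ω = a'})
        * (pr μ {ω | U ω = u ∧ B ω = b} * pr μ {ω | U ω = u' ∧ B ω = b'}) := by
      rw [hsplit, hsplit]; ring
    _ = (pr μ {ω | U ω = u ∧ A ω = a'} * pr μ {ω | U ω = u' ∧ A ω = a})
        * (pr μ {ω | U ω = u ∧ B ω = b'} * pr μ {ω | U ω = u' ∧ B ω = b}) := by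
      rw [hA.cross hfA ha, hB.cross hfB hb]
    _ = (pr μ {ω | U ω = u ∧ (A ω, B ω) = (a', b')} * pr μ {ω | U ω = u})
        * (pr μ {ω | U ω = u' ∧ (A ω, B ω) = (a, b)} * pr μ {ω | U ω = u'}) := by
      rw [hsplit, hsplit]; ring
    _ = _ := by ring

lemma condIndep_of_funDep_cond {Y : Ω → β} (h : FunDep μ T Y) : CondIndep μ U Y T := by
  obtain ⟨g, hg⟩ := h
  intro u y t
  by_cases hy : g t = y
  · have e1 : pr μ {ω | U ω = u ∧ Y ω = y ∧ T ω = t} = pr μ {ω | U ω = u ∧ T ω = t} :=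
      pr_congr fun ω hω => ⟨fun h' => ⟨h'.1, h'.2.2⟩,
        fun h' => ⟨h'.1, by rw [hg ω hω, h'.2, hy], h'.2⟩⟩
    have e2 : pr μ {ω | Y ω = y ∧ T ω = t} = pr μ {ω | T ω = t} :=
      pr_congr fun ω hω => ⟨And.right, fun h' => ⟨by rw [hg ω hω, h', hy], h'⟩⟩
    rw [e1, e2]
  · have h0 : pr μ {ω | Y ω = y ∧ T ω = t} = 0 :=
      pr_eq_zero_iff.mpr fun ω hω h' => hy (by rw [← h'.2, ← hg ω hω, h'.1])
    rw [h0, pr_eq_zero_of_imp (fun ω h' => h'.2) h0, zero_mul, mul_zero]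

lemma SuffStat.of_funDep {A : Ω → α} {B : Ω → β} (h : SuffStat μ A U T) (hAB : FunDep μ A B)
    (hBT : FunDep μ B T) : SuffStat μ B U T :=
  ⟨hBT, h.2.of_funDep_right hAB⟩

lemma SuffStat.prod_of_condIndep {Y : Ω → β} (hT : SuffStat μ Y U T)
    (hXY : CondIndep μ U X Y) : SuffStat μ (fun ω => (X ω, Y ω)) U T := by
  obtain ⟨⟨φ, hφ⟩, hY⟩ := hT
  refine ⟨⟨φ ∘ Prod.snd, hφ⟩, (hXY.of_infoEq_cond ⟨⟨fun y => (φ y, y), fun ω hω => ?_⟩,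
    ⟨Prod.snd, fun _ _ => rfl⟩⟩).contraction hY⟩
  rw [hφ ω hω]

end Sufficiency

section JointStatistics

variable {ι : Type} {α β : ι → Type} {U : Ω → κ}

lemma FunDep.jointFin {A : ∀ i, Ω → α i} {T : ∀ i, Ω → β i} (h : ∀ i, FunDep μ (A i) (T i))
    (S : Finset ι) : FunDep μ (jointFin A S) (jointFin T S) := by
  choose f hf using h
  exact ⟨fun a i => f i.1 (a i), fun ω hω => funext fun i => hf i.1 ω hω⟩

lemma infoEq_jointFin_insert [DecidableEq ι] (T : ∀ i, Ω → β i) (a : ι) (S : Finset ι) :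
    InfoEq μ (fun ω => (T a ω, jointFin T S ω)) (jointFin T (insert a S)) := by
  refine ⟨FunDep.of_forall fun ω _ ω' _ h => ?_,
    ⟨fun t => (t ⟨a, Finset.mem_insert_self a S⟩,
      fun i => t ⟨i.1, Finset.mem_insert_of_mem i.2⟩), fun _ _ => rfl⟩⟩
  obtain ⟨ha, hS⟩ := Prod.mk.inj h
  funext ⟨i, hi⟩
  rcases Finset.mem_insert.mp hi with rfl | hiS
  · exact ha
  · exact congrFun hS ⟨i, hiS⟩

lemma suffStat_jointFin {A : ∀ i, Ω → α i} {T : ∀ i, Ω → β i}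
    (hT : ∀ i, SuffStat μ (A i) U (T i))
    (hA : ∀ a S, a ∉ S → CondIndep μ (A a) (jointFin A S) U) (S : Finset ι) :
    SuffStat μ (jointFin A S) U (jointFin T S) := by
  classical
  refine ⟨FunDep.jointFin (fun i => (hT i).1) S, ?_⟩
  induction S using Finset.induction with
  | empty =>
    exact condIndep_of_funDep_cond ⟨fun _ i => absurd i.2 (Finset.notMem_empty _),
      fun _ _ => funext fun i => absurd i.2 (Finset.notMem_empty _)⟩
  | insert a S ha ih =>
    have h := (hT a).prod ⟨FunDep.jointFin (fun i => (hT i).1) S, ih⟩ (hA a S ha)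
    exact (h.2.of_funDep_right (infoEq_jointFin_insert A a S).1).of_infoEq_cond
      (infoEq_jointFin_insert T a S)

end JointStatistics

section CommonPart

variable {ι : Type} {U : Ω → κ} {Y : Ω → α} {Z : Ω → β}

def Linked (μ : PMF Ω) (Y : Ω → α) (Z : Ω → β) : α ⊕ β → α ⊕ β → Prop
  | .inl y, .inr z => pr μ {ω | Y ω = y ∧ Z ω = z} ≠ 0
  | _, _ => False

/-- The Gács–Körner common part of `Y` and `Z`: the connected component of the value of `Y` in
the bipartite graph `Linked μ Y Z` of jointly possible values. -/
def commonPart (μ : PMF Ω) (Y : Ω → α) (Z : Ω → β) : Ω → Quot (Linked μ Y Z) :=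
  fun ω => Quot.mk _ (.inl (Y ω))

lemma commonPart_eq {ω : Ω} (hω : ω ∈ μ.support) :
    commonPart μ Y Z ω = Quot.mk _ (.inr (Z ω)) :=
  Quot.sound (pr_ne_zero_of_mem_support (p := fun ω' => Y ω' = Y ω ∧ Z ω' = Z ω) hω ⟨rfl, rfl⟩)

lemma funDep_commonPart_left : FunDep μ Y (commonPart μ Y Z) :=
  ⟨fun y => Quot.mk _ (.inl y), fun _ _ => rfl⟩

lemma funDep_commonPart_right : FunDep μ Z (commonPart μ Y Z) :=
  ⟨fun z => Quot.mk _ (.inr z), fun _ hω => commonPart_eq hω⟩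

lemma CondIndep.funDep_commonPart {X : Ω → γ} (h : CondIndep μ Y Z X) :
    FunDep μ X (commonPart μ Y Z) := by
  refine FunDep.of_forall fun ω hω ω' hω' hx => ?_
  -- `Y = Y ω` and `Z = Z ω'` are each possible together with `X = X ω`, hence jointly so.
  have hne : pr μ {ω₁ | Y ω₁ = Y ω ∧ Z ω₁ = Z ω' ∧ X ω₁ = X ω} ≠ 0 := by
    intro h0
    have key := h (Y ω) (Z ω') (X ω)
    rw [h0, zero_mul] at key
    exact mul_ne_zero (pr_ne_zero_of_mem_support (p := fun ω₁ => Y ω₁ = Y ω ∧ X ω₁ = X ω)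
      hω ⟨rfl, rfl⟩) (pr_ne_zero_of_mem_support (p := fun ω₁ => Z ω₁ = Z ω' ∧ X ω₁ = X ω)
      hω' ⟨rfl, hx.symm⟩) key.symm
  obtain ⟨ω₁, hω₁, hY, hZ, -⟩ := pr_ne_zero_iff.mp hne
  calc commonPart μ Y Z ω = commonPart μ Y Z ω₁ := by simp only [commonPart, hY]
    _ = commonPart μ Y Z ω' := by rw [commonPart_eq hω₁, commonPart_eq hω', hZ]

/-- `P(U = · | E v) = P(U = · | E v')` with both events non-null, or `v = v'`. -/
def SameCondDist (μ : PMF Ω) (U : Ω → κ) (E : ι → Ω → Prop) (v v' : ι) : Prop :=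
  v = v' ∨ pr μ {ω | E v ω} ≠ 0 ∧ pr μ {ω | E v' ω} ≠ 0 ∧
    ∀ u, pr μ {ω | U ω = u ∧ E v ω} * pr μ {ω | E v' ω}
      = pr μ {ω | U ω = u ∧ E v' ω} * pr μ {ω | E v ω}

lemma equivalence_sameCondDist (E : ι → Ω → Prop) : Equivalence (SameCondDist μ U E) where
  refl _ := .inl rfl
  symm := by
    rintro v v' (rfl | ⟨hv, hv', h⟩)
    exacts [.inl rfl, .inr ⟨hv', hv, fun u => (h u).symm⟩]
  trans := by
    rintro v m v' (rfl | ⟨hv, hm, h₁⟩) (rfl | ⟨hm', hv', h₂⟩)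
    · exact .inl rfl
    · exact .inr ⟨hm', hv', h₂⟩
    · exact .inr ⟨hv, hm, h₁⟩
    · exact .inr ⟨hv, hv', fun u => cross_mul_trans hm (pr_ne_top _) (h₁ u) (h₂ u)⟩

lemma sameCondDist_of_linked (hZ : CondIndep μ U Z Y) (hY : CondIndep μ U Y Z) {v v' : α ⊕ β}
    (h : Linked μ Y Z v v') :
    SameCondDist μ U (Sum.elim (fun y ω => Y ω = y) (fun z ω => Z ω = z)) v v' := by
  rcases v with y | z <;> rcases v' with y' | z' <;> simp only [Linked] at h
  refine .inr ⟨fun h0 => h (pr_eq_zero_of_imp (fun ω h' => h'.1) h0),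
    fun h0 => h (pr_eq_zero_of_imp (fun ω h' => h'.2) h0), fun u => ?_⟩
  have e1 : pr μ {ω | U ω = u ∧ Z ω = z' ∧ Y ω = y} = pr μ {ω | U ω = u ∧ Y ω = y ∧ Z ω = z'} :=
    pr_congr fun ω _ => by tauto
  have e2 : pr μ {ω | Z ω = z' ∧ Y ω = y} = pr μ {ω | Y ω = y ∧ Z ω = z'} :=
    pr_congr fun ω _ => and_comm
  have k₁ := hZ u z' y
  rw [e1, e2] at k₁
  exact cross_mul_trans h (pr_ne_top _) k₁.symm (hY u y z')

lemma condIndep_commonPart (hZ : CondIndep μ U Z Y) (hY : CondIndep μ U Y Z) :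
    CondIndep μ U Y (commonPart μ Y Z) := by
  refine condIndep_of_cross (f := fun y => Quot.mk _ (.inl y)) (fun _ _ => rfl) ?_
  intro u u' y y' hyy'
  have hsame := (equivalence_sameCondDist _).eqvGen_iff.mp
    ((Quot.eqvGen_exact hyy').mono fun v v' => sameCondDist_of_linked hZ hY)
  rcases hsame with hy | ⟨-, hy', h⟩
  · cases Sum.inl_injective hy
    rfl
  simp only [Sum.elim_inl] at hy' h
  refine (ENNReal.mul_left_inj hy' (pr_ne_top _)).mp ?_
  calc pr μ {ω | U ω = u ∧ Y ω = y} * pr μ {ω | U ω = u' ∧ Y ω = y'} * pr μ {ω | Y ω = y'}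
      = (pr μ {ω | U ω = u ∧ Y ω = y} * pr μ {ω | Y ω = y'})
        * pr μ {ω | U ω = u' ∧ Y ω = y'} := by ring
    _ = pr μ {ω | U ω = u ∧ Y ω = y'} * (pr μ {ω | U ω = u' ∧ Y ω = y'} * pr μ {ω | Y ω = y}) := by
      rw [h u]; ring
    _ = _ := by rw [← h u']; ring

end CommonPart

section MarkovChain

variable {ε : Type} [Zero ε] {W : Ω → γ} {V : ℕ → Ω → ε} {N : ℕ}

def window (V : ℕ → Ω → ε) (lo hi : ℕ) : Ω → ℕ → ε :=
  fun ω l => if lo ≤ l ∧ l < hi then V l ω else 0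

lemma window_eq_window_iff {lo hi : ℕ} {ω ω' : Ω} :
    window V lo hi ω = window V lo hi ω' ↔ ∀ l, lo ≤ l → l < hi → V l ω = V l ω' := by
  refine ⟨fun h l h₁ h₂ => by simpa [window, h₁, h₂] using congrFun h l,
    fun h => funext fun l => ?_⟩
  unfold window
  split_ifs with hl
  exacts [h l hl.1 hl.2, rfl]

lemma funDep_window_of_forall {Y : Ω → δ} {lo hi : ℕ}
    (h : ∀ ω ω', (∀ l, lo ≤ l → l < hi → V l ω = V l ω') → Y ω = Y ω') :
    FunDep μ (window V lo hi) Y :=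
  FunDep.of_forall fun ω _ ω' _ hω => h ω ω' (window_eq_window_iff.mp hω)

def IsMarkovChain (μ : PMF Ω) (W : Ω → γ) (V : ℕ → Ω → ε) (N : ℕ) : Prop :=
  ∀ m < N, CondIndep μ (V (m + 1)) (fun ω => (W ω, window V 0 m ω)) (V m)

lemma IsMarkovChain.condIndep_future (h : IsMarkovChain μ W V N) {m : ℕ} (hm : m ≤ N) :
    CondIndep μ (window V (m + 1) (N + 1)) (fun ω => (W ω, window V 0 m ω)) (V m) := by
  induction hm using Nat.decreasingInduction with
  | self =>
    refine (condIndep_of_funDep_cond ⟨fun _ _ => 0, fun ω _ => ?_⟩).symm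
    funext l
    exact if_neg (by omega)
  | of_succ m hm ih =>
    have past : CondIndep μ (window V (m + 2) (N + 1))
        (fun ω => ((W ω, window V 0 m ω), V m ω)) (V (m + 1)) :=
      ih.of_funDep_right <| FunDep.of_forall fun ω _ ω' _ hω => by
        obtain ⟨hW, hV⟩ := Prod.mk.inj hω
        have hV := window_eq_window_iff.mp hV
        have hpast : window V 0 m ω = window V 0 m ω' :=
          window_eq_window_iff.mpr fun l _ hl => hV l (by omega) (by omega)
        rw [hW, hpast, hV m (by omega) (by omega)]
    have swap : InfoEq μ (fun ω => (V (m + 1) ω, V m ω)) (fun ω => (V m ω, V (m + 1) ω)) :=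
      ⟨⟨Prod.swap, fun _ _ => rfl⟩, ⟨Prod.swap, fun _ _ => rfl⟩⟩
    have future : CondIndep μ (fun ω => (W ω, window V 0 m ω))
        (fun ω => (window V (m + 2) (N + 1) ω, V (m + 1) ω)) (V m) :=
      (past.weak_union.of_infoEq_cond swap).symm.contraction (h m hm).symm
    refine (future.of_funDep_right (FunDep.of_forall fun ω _ ω' _ hω => ?_)).symm
    obtain ⟨hF, hV⟩ := Prod.mk.inj hω
    refine window_eq_window_iff.mpr fun l h₁ h₂ => ?_
    rcases Nat.eq_or_lt_of_le h₁ with rfl | h₁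
    · exact hV
    · exact window_eq_window_iff.mp hF l h₁ h₂

lemma IsMarkovChain.condIndep_window {U : Ω → κ} {R : Ω → δ}
    (h : IsMarkovChain μ (fun ω => (U ω, R ω)) V N) (h₀ : CondIndep μ (V 0) R U) {m : ℕ}
    (hm : m ≤ N) : CondIndep μ (window V 0 (m + 1)) R U := by
  induction m with
  | zero =>
    refine h₀.of_funDep_left ⟨fun v l => if l = 0 then v else 0, fun ω _ => funext fun l => ?_⟩
    by_cases hl : l = 0 <;> simp [window, hl]
  | succ m ih =>
    have step : CondIndep μ (V (m + 1)) R (fun ω => (U ω, window V 0 (m + 1) ω)) := by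
      refine ((h m (by omega)).of_funDep_right ⟨fun p => (p.1.2, p.1.1, p.2), fun _ _ => rfl⟩
        |>.weak_union.of_infoEq_cond (InfoEq.of_forall fun ω _ ω' _ => ?_))
      simp only [Prod.mk.injEq, window_eq_window_iff]
      constructor
      · rintro ⟨hVm, hU, hV⟩
        refine ⟨hU, fun l _ hl => ?_⟩
        rcases Nat.lt_succ_iff_lt_or_eq.mp hl with hl | rfl
        exacts [hV l (Nat.zero_le l) hl, hVm]
      · rintro ⟨hU, hV⟩
        exact ⟨hV m (by omega) (by omega), hU, fun l _ hl => hV l (Nat.zero_le l) (by omega)⟩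
    have grown : CondIndep μ R (fun ω => (V (m + 1) ω, window V 0 (m + 1) ω)) U :=
      step.symm.contraction (ih (by omega)).symm
    refine grown.symm.of_funDep_left (FunDep.of_forall fun ω _ ω' _ hω => ?_)
    obtain ⟨hV, hpast⟩ := Prod.mk.inj hω
    refine window_eq_window_iff.mpr fun l _ hl => ?_
    rcases Nat.lt_succ_iff_lt_or_eq.mp hl with hl | rfl
    exacts [window_eq_window_iff.mp hpast l (Nat.zero_le l) hl, hV]

end MarkovChain

lemma SatisfiesBN.condIndep_of_parentSet_eq {ν : Type} {X : ν → Ω → α} {E : ν → ν → Prop}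
    (h : SatisfiesBN μ X E) {w p : ν} (hp : parentSet E w = {p}) {Y : Ω → δ}
    (hY : ∀ ω ω', (∀ v ∈ nonDescSet E w, X v ω = X v ω') → Y ω = Y ω') :
    CondIndep μ (X w) Y (X p) := by
  have hpw : p ∈ parentSet E w := hp ▸ rfl
  refine ((h w).of_funDep_right (FunDep.of_forall fun ω _ ω' _ hω =>
    hY ω ω' fun v hv => congrFun hω ⟨v, hv⟩)).of_infoEq_cond
    ⟨⟨fun g => g ⟨p, hpw⟩, fun _ _ => rfl⟩, ⟨fun x _ => x, fun ω _ => funext fun v => ?_⟩⟩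
  obtain ⟨v, hv⟩ := v
  rw [hp] at hv
  subst hv
  rfl

section Networks

variable {n k : ℕ} {C1 C2 : Finset (Fin n)} {A : Fin k → Finset (Fin n)} {b : Fin k → Fin n}
  {i : Fin n} {v w : BNode n k}

def BNode.chain : BNode n k → Option (Fin n)
  | .u _ => none
  | .y i | .x i _ | .z i => some i

def BNode.depth : BNode n k → ℕ
  | .u _ | .y _ => 0
  | .x _ j => j + 1
  | .z _ => k + 1

lemma BNode.depth_le (v : BNode n k) : v.depth ≤ k + 1 := by
  cases v <;> simp only [BNode.depth] <;> omega

def chainNode (k : ℕ) (i : Fin n) (m : ℕ) : BNode n k :=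
  if h₀ : m = 0 then .y i else if h : m ≤ k then .x i ⟨m - 1, by omega⟩ else .z i

lemma chainNode_zero : chainNode k i 0 = .y i := rfl

lemma chainNode_succ (j : Fin k) : chainNode k i (j + 1) = .x i j := by
  simp [chainNode, Nat.succ_le_of_lt j.2]

lemma chainNode_last : chainNode k i (k + 1) = .z i := by
  simp [chainNode]

lemma chain_chainNode (m : ℕ) : (chainNode k i m).chain = some i := by
  unfold chainNode
  split_ifs <;> rfl

lemma depth_chainNode {m : ℕ} (hm : m ≤ k + 1) : (chainNode k i m).depth = m := by
  unfold chainNode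
  split_ifs <;> simp only [BNode.depth] <;> omega

lemma chainNode_depth (hv : v.chain = some i) : chainNode k i v.depth = v := by
  cases v <;> simp only [BNode.chain, Option.some.injEq, reduceCtorEq] at hv <;> subst hv
  · exact chainNode_zero
  · exact chainNode_last
  · exact chainNode_succ _

lemma edge1_chainNode_succ (hk : 1 ≤ k) {m : ℕ} (hm : m ≤ k) :
    edge1 n k C1 (chainNode k i m) (chainNode k i (m + 1)) := by
  unfold chainNode
  split_ifs <;> simp [edge1] <;> omega

lemma edge1_from_chain (h : edge1 n k C1 v w) (hv : v.chain = some i) :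
    w.chain = some i ∧ w.depth = v.depth + 1 := by
  cases v <;> cases w <;> simp_all [edge1, BNode.chain, BNode.depth]
  omega

lemma edge1_into_chain (h : edge1 n k C1 v w) (hw : w.chain = some i) :
    (v.chain = none ∧ w.depth = 0) ∨ (v.chain = some i ∧ w.depth = v.depth + 1) := by
  cases v <;> cases w <;> simp_all [edge1, BNode.chain, BNode.depth]
  omega

lemma chain_of_reflTransGen_edge1 (h : Relation.ReflTransGen (edge1 n k C1) v w)
    (hv : v.chain = some i) : w.chain = some i ∧ v.depth ≤ w.depth := by
  induction h with
  | refl => exact ⟨hv, le_rfl⟩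
  | tail _ he ih =>
    obtain ⟨hc, hd⟩ := edge1_from_chain he ih.1
    exact ⟨hc, by omega⟩

lemma mem_nonDescSet_edge1 (hw : w.chain = some i) (hw₀ : 0 < w.depth)
    (hv : v.chain = some i → v.depth + 1 < w.depth) : v ∈ nonDescSet (edge1 n k C1) w := by
  refine ⟨fun hR => ?_, fun he => ?_⟩
  · obtain ⟨hc, hd⟩ := chain_of_reflTransGen_edge1 hR hw
    have := hv hc
    omega
  · rcases edge1_into_chain he hw with ⟨-, hd⟩ | ⟨hc, hd⟩
    · omega
    · have := hv hc
      omega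

lemma mem_nonDescSet_edge1_y (hv : v.chain ≠ some i) (hvu : v ≠ .u i) :
    v ∈ nonDescSet (edge1 n k C1) (.y i) := by
  refine ⟨fun hR => hv (chain_of_reflTransGen_edge1 hR rfl).1, fun he => ?_⟩
  cases v <;> simp_all [edge1]

lemma parentSet_edge1_chainNode (hk : 1 ≤ k) {m : ℕ} (hm : m ≤ k) :
    parentSet (edge1 n k C1) (chainNode k i (m + 1)) = {chainNode k i m} := by
  ext v
  refine ⟨fun he => ?_, fun hv => hv ▸ edge1_chainNode_succ hk hm⟩
  rcases edge1_into_chain he (chain_chainNode _) with ⟨-, hd⟩ | ⟨hc, hd⟩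
  · rw [depth_chainNode (by omega)] at hd
    omega
  · rw [depth_chainNode (by omega)] at hd
    rw [Set.mem_singleton_iff, ← chainNode_depth hc, show v.depth = m by omega]

lemma parentSet_edge1_y : parentSet (edge1 n k C1) (.y i) = {.u i} := by
  ext v
  cases v <;> simp [parentSet, edge1, eq_comm]

lemma parentSet_edge2_y : parentSet (edge2 n k C2 A b) (.y i) = {.z i} := by
  ext v
  cases v <;> simp [parentSet, edge2, eq_comm]

lemma u_mem_nonDescSet_edge2_y (i' : Fin n) :
    (.u i' : BNode n k) ∈ nonDescSet (edge2 n k C2 A b) (.y i) := by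
  refine ⟨fun hR => ?_, fun he => he⟩
  rcases hR.cases_head with h | ⟨w, he, -⟩
  · cases h
  · cases w <;> exact he

variable {X : BNode n k → Ω → ℕ}

def otherTuples (X : BNode n k → Ω → ℕ) (i : Fin n) :
    Ω → ({i' // i' ≠ i} → (Fin k → ℕ) × ℕ × ℕ) :=
  fun ω i' => tupleVar X i'.1 ω

lemma tupleVar_eq_of_forall {ω ω' : Ω}
    (h : ∀ v : BNode n k, v.chain = some i → X v ω = X v ω') :
    tupleVar X i ω = tupleVar X i ω' := by
  simp only [tupleVar, h (.y i) rfl, h (.z i) rfl, fun j => h (.x i j) rfl]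

lemma isMarkovChain_edge1 (hk : 1 ≤ k) (h1 : SatisfiesBN μ X (edge1 n k C1)) (i : Fin n) :
    IsMarkovChain μ (fun ω => (Ujoint X ω, otherTuples X i ω)) (fun m => X (chainNode k i m))
      (k + 1) := by
  intro m hm
  refine h1.condIndep_of_parentSet_eq (parentSet_edge1_chainNode hk (by omega)) fun ω ω' hω => ?_
  have hnd : ∀ v : BNode n k, (v.chain = some i → v.depth < m) → X v ω = X v ω' :=
    fun v hv => hω v <| mem_nonDescSet_edge1 (chain_chainNode _)
      (by rw [depth_chainNode (by omega)]; omega)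
      fun hc => by rw [depth_chainNode (by omega)]; have := hv hc; omega
  refine Prod.ext (Prod.ext (funext fun i' => hnd _ fun h => by simp [BNode.chain] at h)
    (funext fun ⟨i', hi'⟩ => tupleVar_eq_of_forall fun v hv => hnd v fun hc =>
      absurd (Option.some.inj (hv.symm.trans hc)) hi'))
    (window_eq_window_iff.mpr fun l _ hl => hnd _ fun _ => ?_)
  rw [depth_chainNode (by omega)]
  exact hl

lemma condIndep_y_otherTuples (h1 : SatisfiesBN μ X (edge1 n k C1)) (i : Fin n) :
    CondIndep μ (X (.y i)) (otherTuples X i) (Ujoint X) := by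
  have h := h1.condIndep_of_parentSet_eq (w := .y i) parentSet_edge1_y
    (Y := fun ω => (otherTuples X i ω, fun i' : {i' // i' ≠ i} => X (.u i'.1) ω))
    fun ω ω' hω => Prod.ext
      (funext fun ⟨i', hi'⟩ => tupleVar_eq_of_forall fun v hv => hω v <|
        mem_nonDescSet_edge1_y (by rw [hv]; simpa using hi')
          (by rintro rfl; simp [BNode.chain] at hv))
      (funext fun ⟨i', hi'⟩ => hω _ <|
        mem_nonDescSet_edge1_y (by simp [BNode.chain]) (by simpa using hi'))
  refine h.weak_union.of_infoEq_cond (InfoEq.of_forall fun ω _ ω' _ => ?_)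
  simp only [Prod.mk.injEq, funext_iff, Ujoint, Subtype.forall]
  refine ⟨fun ⟨h₁, h₂⟩ i' => ?_, fun h => ⟨h i, fun i' _ => h i'⟩⟩
  by_cases hi : i' = i
  · exact hi ▸ h₁
  · exact h₂ i' hi

lemma condIndep_y_u_z (h2 : SatisfiesBN μ X (edge2 n k C2 A b)) (i : Fin n) :
    CondIndep μ (X (.y i)) (Ujoint X) (X (.z i)) :=
  h2.condIndep_of_parentSet_eq parentSet_edge2_y fun _ _ hω =>
    funext fun i' => hω _ (u_mem_nonDescSet_edge2_y i')

lemma condIndep_tupleVar_otherTuples (hk : 1 ≤ k) (h1 : SatisfiesBN μ X (edge1 n k C1))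
    (i : Fin n) : CondIndep μ (tupleVar X i) (otherTuples X i) (Ujoint X) :=
  ((isMarkovChain_edge1 hk h1 i).condIndep_window (condIndep_y_otherTuples h1 i) le_rfl)
    |>.of_funDep_left (funDep_window_of_forall fun _ _ h => tupleVar_eq_of_forall fun v hv => by
      rw [← chainNode_depth hv]
      exact h _ (Nat.zero_le _) (Nat.lt_succ_of_le v.depth_le))

lemma condIndep_u_xz_y (hk : 1 ≤ k) (h1 : SatisfiesBN μ X (edge1 n k C1)) (i : Fin n) :
    CondIndep μ (Ujoint X) (fun ω => ((fun j => X (.x i j) ω), X (.z i) ω)) (X (.y i)) :=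
  (((isMarkovChain_edge1 hk h1 i).condIndep_future (Nat.zero_le _)).symm.of_funDep_left
    ⟨fun p => p.1.1, fun _ _ => rfl⟩).of_funDep_right
    (funDep_window_of_forall fun ω ω' h => Prod.ext
      (funext fun j => show X (.x i j) ω = X (.x i j) ω' by
        rw [← chainNode_succ]; exact h _ (by omega) (by omega))
      (show X (.z i) ω = X (.z i) ω' by
        rw [← chainNode_last]; exact h _ (by omega) (by omega)))

lemma condIndep_y_z_x (hk : 1 ≤ k) (h1 : SatisfiesBN μ X (edge1 n k C1)) (i : Fin n)
    (j : Fin k) : CondIndep μ (X (.y i)) (X (.z i)) (X (.x i j)) := by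
  have h := (isMarkovChain_edge1 hk h1 i).condIndep_future (m := j + 1) (by omega)
  simp only [chainNode_succ] at h
  refine ((h.of_funDep_left (funDep_window_of_forall fun ω ω' h' => ?_)).of_funDep_right
    (FunDep.of_forall fun ω _ ω' _ h' => ?_)).symm
  · rw [← chainNode_last]
    exact h' _ (by omega) (by omega)
  · rw [← chainNode_zero]
    exact window_eq_window_iff.mp (Prod.mk.inj h').2 0 le_rfl (by omega)

lemma funDep_minSuffStat_of_node (hk : 1 ≤ k) (h1 : SatisfiesBN μ X (edge1 n k C1))
    (h2 : SatisfiesBN μ X (edge2 n k C2 A b)) {T : Ω → β}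
    (hT : MinSuffStat μ (tupleVar X i) (Ujoint X) T) :
    FunDep μ (X (.y i)) T ∧ FunDep μ (X (.z i)) T ∧ ∀ j, FunDep μ (X (.x i j)) T := by
  have hXZ := condIndep_u_xz_y hk h1 i
  have hW := condIndep_commonPart (hXZ.of_funDep_right ⟨Prod.snd, fun _ _ => rfl⟩)
    (condIndep_y_u_z h2 i).symm
  have hWT : FunDep μ (commonPart μ (X (.y i)) (X (.z i))) T :=
    hT.2 _ _ <| (SuffStat.prod_of_condIndep ⟨funDep_commonPart_left, hW⟩ hXZ).of_funDep
      ⟨fun p => (p.1.1, p.2, p.1.2), fun _ _ => rfl⟩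
      (FunDep.trans ⟨fun t => t.2.1, fun _ _ => rfl⟩ funDep_commonPart_left)
  exact ⟨funDep_commonPart_left.trans hWT, funDep_commonPart_right.trans hWT,
    fun j => (condIndep_y_z_x hk h1 i j).funDep_commonPart.trans hWT⟩

lemma suffStat_jointFin_tupleVar (hk : 1 ≤ k) (h1 : SatisfiesBN μ X (edge1 n k C1))
    {β : Fin n → Type} {T : ∀ i, Ω → β i}
    (hT : ∀ i, MinSuffStat μ (tupleVar X i) (Ujoint X) (T i)) (S : Finset (Fin n)) :
    SuffStat μ (jointFin (tupleVar X) S) (Ujoint X) (jointFin T S) :=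
  suffStat_jointFin (fun i => (hT i).1) (fun a _ ha => (condIndep_tupleVar_otherTuples hk h1 a)
    |>.of_funDep_right ⟨fun t i => t ⟨i.1, fun h => ha (h ▸ i.2)⟩, fun _ _ => rfl⟩) S

end Networks

end

theorem networks_joint_suffStat_general (n k : ℕ) (hk : 1 ≤ k)
    (C1 C2 : Finset (Fin n)) (A : Fin k → Finset (Fin n)) (b : Fin k → Fin n)
    (Ω : Type) (μ : PMF Ω) (X : BNode n k → Ω → ℕ)
    (h1 : SatisfiesBN μ X (edge1 n k C1))
    (h2 : SatisfiesBN μ X (edge2 n k C2 A b))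
    (β : Fin n → Type) (T : ∀ i, Ω → β i)
    (hT : ∀ i, MinSuffStat μ (tupleVar X i) (Ujoint X) (T i)) :
    ∀ (S : Finset (Fin n)) (j : Fin k),
      SuffStat μ (fun ω => fun i : {i // i ∈ S} => X (.x i.1 j) ω) (Ujoint X)
        (jointFin T S) ∧
      SuffStat μ (fun ω => fun i : {i // i ∈ S} => X (.y i.1) ω) (Ujoint X)
        (jointFin T S) ∧
      SuffStat μ (fun ω => fun i : {i // i ∈ S} => X (.z i.1) ω) (Ujoint X)
        (jointFin T S) := by
  intro S j
  have hS := suffStat_jointFin_tupleVar hk h1 hT S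
  have hnode := fun i => funDep_minSuffStat_of_node hk h1 h2 (hT i)
  refine ⟨?_, ?_, ?_⟩
  · exact hS.of_funDep ⟨fun t i => (t i).1 j, fun _ _ => rfl⟩
      (FunDep.jointFin (fun i => (hnode i).2.2 j) S)
  · exact hS.of_funDep ⟨fun t i => (t i).2.1, fun _ _ => rfl⟩
      (FunDep.jointFin (fun i => (hnode i).1) S)
  · exact hS.of_funDep ⟨fun t i => (t i).2.2, fun _ _ => rfl⟩
      (FunDep.jointFin (fun i => (hnode i).2.1) S)

/-- Lemma 8 of the paper: for any `S ⊆ {1,…,n}` and `j`, Networks 1 and 2 imply that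
`T_S = (T_i)_{i ∈ S}` is a sufficient statistic of `X_S^j` (and of `Y_S`, and of `Z_S`)
for `U`, where `T_i = S((X_i^1,…,X_i^k,Y_i,Z_i); U)`. -/
theorem networks_joint_suffStat (n k : ℕ) (hn : 2 ≤ n) (hk : 1 ≤ k)
    (C1 C2 : Finset (Fin n)) (hC : Disjoint C1 C2)
    (A : Fin k → Finset (Fin n)) (b : Fin k → Fin n) (hb : ∀ j, b j ∉ A j)
    (Ω : Type) (μ : PMF Ω) (X : BNode n k → Ω → ℕ)
    (hfin : ∀ v, FinSupp μ (X v))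
    (h1 : SatisfiesBN μ X (edge1 n k C1))
    (h2 : SatisfiesBN μ X (edge2 n k C2 A b))
    (β : Fin n → Type) (T : ∀ i, Ω → β i)
    (hT : ∀ i, MinSuffStat μ (tupleVar X i) (Ujoint X) (T i)) :
    ∀ (S : Finset (Fin n)) (j : Fin k),
      SuffStat μ (fun ω => fun i : {i // i ∈ S} => X (.x i.1 j) ω) (Ujoint X)
        (jointFin T S) ∧
      SuffStat μ (fun ω => fun i : {i // i ∈ S} => X (.y i.1) ω) (Ujoint X)
        (jointFin T S) ∧
      SuffStat μ (fun ω => fun i : {i // i ∈ S} => X (.z i.1) ω) (Ujoint X)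
        (jointFin T S) :=
  networks_joint_suffStat_general n k hk C1 C2 A b Ω μ X h1 h2 β T hT

end Paper
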